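/- Distinct nonzero eigenvalues of the matricization Gram matrix are invariant under scaled-orthonormal loadings: if S = F ×1 A1 ×2 A2 ×3 A3 with Amᵀ Am = I_m · Id_{Rm} for all m, then M1(S)·M1(S)ᵀ = I2·I3 · A1 · (M1(F) M1(F)ᵀ) · A1ᵀ; consequently the nonzero eigenvalues of M1(S)M1(S)ᵀ equal I1·I2·I3 times the eigenvalues of M1(F)M1(F)ᵀ. -/

import Mathlib

/-!
Mode-1 matricization turns the Tucker product into `A1 * M1(F) * (A2 ⊗ A3)ᵀ`, and the Kronecker
factor `K = A2 ⊗ A3` again has orthogonal columns, `Kᵀ K = I2 I3 · 1`. So `K` cancels from the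
Gram matrix, leaving `I2 I3 · A1 G A1ᵀ` with `G = M1(F) M1(F)ᵀ`. If `Bᵀ B = c · 1` with `c ≠ 0`,
then `v ↦ Bᵀ v` and `w ↦ B w` carry eigenvectors of `B G Bᵀ` for a nonzero eigenvalue `μ` to
eigenvectors of `G` for `μ / c` and back.
-/

open Matrix

noncomputable section

/-- Tucker product F ×₁ A1 ×₂ A2 ×₃ A3. -/
def tuck {I1 I2 I3 R1 R2 R3 : ℕ} (F : Fin R1 → Fin R2 → Fin R3 → ℝ)
    (A1 : Matrix (Fin I1) (Fin R1) ℝ) (A2 : Matrix (Fin I2) (Fin R2) ℝ)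
    (A3 : Matrix (Fin I3) (Fin R3) ℝ) : Fin I1 → Fin I2 → Fin I3 → ℝ :=
  fun i1 i2 i3 => ∑ r1, ∑ r2, ∑ r3, A1 i1 r1 * A2 i2 r2 * A3 i3 r3 * F r1 r2 r3

/-- Mode-1 matricization. -/
def mat1 {I1 I2 I3 : ℕ} (S : Fin I1 → Fin I2 → Fin I3 → ℝ) :
    Matrix (Fin I1) (Fin I2 × Fin I3) ℝ :=
  Matrix.of fun i p => S i p.1 p.2

open Kronecker

theorem kronecker_transpose_mul_self_of_eq_smul_one {R : Type*} [CommSemiring R]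
    {l m n p : Type*} [Fintype l] [Fintype n] [DecidableEq m] [DecidableEq p]
    {A : Matrix l m R} {B : Matrix n p R} {a b : R}
    (hA : Aᵀ * A = a • 1) (hB : Bᵀ * B = b • 1) :
    (A ⊗ₖ B)ᵀ * (A ⊗ₖ B) = (a * b) • 1 := by
  rw [← kroneckerMap_transpose, ← mul_kronecker_mul, hA, hB, smul_kronecker, kronecker_smul,
    one_kronecker_one, smul_smul]

theorem mul_mul_transpose_gram_of_eq_smul_one {R : Type*} [CommSemiring R]
    {k l m n : Type*} [Fintype l] [Fintype m] [Fintype n] [DecidableEq n]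
    (A : Matrix k m R) (M : Matrix m n R) {C : Matrix l n R} {c : R}
    (hC : Cᵀ * C = c • 1) :
    (A * M * Cᵀ) * (A * M * Cᵀ)ᵀ = c • (A * (M * Mᵀ) * Aᵀ) := by
  calc (A * M * Cᵀ) * (A * M * Cᵀ)ᵀ = A * M * (Cᵀ * C) * Mᵀ * Aᵀ := by
        simp only [transpose_mul, transpose_transpose, Matrix.mul_assoc]
    _ = c • (A * (M * Mᵀ) * Aᵀ) := by
        rw [hC, Matrix.mul_smul, Matrix.mul_one]
        simp only [Matrix.smul_mul, Matrix.mul_assoc]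

theorem exists_smul_mulVec_eq_smul_iff {K n : Type*} [Field K] [Fintype n]
    (G : Matrix n n K) {d : K} (hd : d ≠ 0) (μ : K) :
    (∃ w : n → K, w ≠ 0 ∧ (d • G) *ᵥ w = μ • w) ↔ ∃ w : n → K, w ≠ 0 ∧ G *ᵥ w = (μ / d) • w := by
  refine exists_congr fun w => and_congr_right fun _ => ?_
  rw [smul_mulVec, div_eq_inv_mul, ← smul_smul, eq_inv_smul_iff₀ hd]

theorem exists_mulVec_conj_eq_smul_iff {K m n : Type*} [Field K] [Fintype m] [Fintype n]
    [DecidableEq n] {B : Matrix m n K} {c : K} (hB : Bᵀ * B = c • 1)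
    (hc : c ≠ 0) (G : Matrix n n K) {μ : K} (hμ : μ ≠ 0) :
    (∃ v : m → K, v ≠ 0 ∧ (B * G * Bᵀ) *ᵥ v = μ • v) ↔
      ∃ w : n → K, w ≠ 0 ∧ G *ᵥ w = (μ / c) • w := by
  have hBtB (w : n → K) : Bᵀ *ᵥ (B *ᵥ w) = c • w := by
    rw [mulVec_mulVec, hB, smul_mulVec, one_mulVec]
  constructor
  · rintro ⟨v, hv, hev⟩
    have hconj : (B * G * Bᵀ) *ᵥ v = B *ᵥ (G *ᵥ (Bᵀ *ᵥ v)) := by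
      simp only [mulVec_mulVec, Matrix.mul_assoc]
    refine ⟨Bᵀ *ᵥ v, fun h0 => hv ?_, ?_⟩
    · rw [hconj, h0, mulVec_zero, mulVec_zero, eq_comm, smul_eq_zero] at hev
      exact hev.resolve_left hμ
    · have h := congrArg (Bᵀ *ᵥ ·) hev
      simp only [hconj, hBtB, mulVec_smul] at h
      rw [div_eq_inv_mul, ← smul_smul, ← h, inv_smul_smul₀ hc]
  · rintro ⟨w, hw, hew⟩
    refine ⟨B *ᵥ w, fun h0 => hw ?_, ?_⟩
    · simpa [h0, hc] using (hBtB w).symm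
    · rw [← mulVec_mulVec, hBtB, mulVec_smul, ← mulVec_mulVec, hew, mulVec_smul, smul_smul,
        mul_div_cancel₀ _ hc]

theorem mat1_tuck {I1 I2 I3 R1 R2 R3 : ℕ} (F : Fin R1 → Fin R2 → Fin R3 → ℝ)
    (A1 : Matrix (Fin I1) (Fin R1) ℝ) (A2 : Matrix (Fin I2) (Fin R2) ℝ)
    (A3 : Matrix (Fin I3) (Fin R3) ℝ) :
    mat1 (tuck F A1 A2 A3) = A1 * mat1 F * (A2 ⊗ₖ A3)ᵀ := by
  ext i ⟨i2, i3⟩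
  simp only [mat1, tuck, mul_apply, transpose_apply, of_apply, kroneckerMap_apply,
    Fintype.sum_prod_type, Finset.sum_mul]
  rw [Finset.sum_comm]
  refine Finset.sum_congr rfl fun r2 _ => ?_
  rw [Finset.sum_comm]
  exact Finset.sum_congr rfl fun r3 _ => Finset.sum_congr rfl fun r1 _ => by ring

/-- Under scaled-orthonormal loadings, M1(S)M1(S)ᵀ = I2·I3·A1(M1(F)M1(F)ᵀ)A1ᵀ,
and the nonzero eigenvalues of M1(S)M1(S)ᵀ are I1·I2·I3 times those of
M1(F)M1(F)ᵀ. -/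
theorem matricization_gram_eigenvalues {I1 I2 I3 R1 R2 R3 : ℕ}
    (hI1 : 0 < I1) (hI2 : 0 < I2) (hI3 : 0 < I3)
    (S : Fin I1 → Fin I2 → Fin I3 → ℝ) (F : Fin R1 → Fin R2 → Fin R3 → ℝ)
    (A1 : Matrix (Fin I1) (Fin R1) ℝ) (A2 : Matrix (Fin I2) (Fin R2) ℝ)
    (A3 : Matrix (Fin I3) (Fin R3) ℝ)
    (hdec : S = tuck F A1 A2 A3)
    (hA1 : A1ᵀ * A1 = (I1 : ℝ) • 1) (hA2 : A2ᵀ * A2 = (I2 : ℝ) • 1)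
    (hA3 : A3ᵀ * A3 = (I3 : ℝ) • 1) :
    mat1 S * (mat1 S)ᵀ
      = ((I2 : ℝ) * (I3 : ℝ)) • (A1 * (mat1 F * (mat1 F)ᵀ) * A1ᵀ) ∧
    (∀ μ : ℝ, μ ≠ 0 →
      ((∃ v : Fin I1 → ℝ, v ≠ 0 ∧ (mat1 S * (mat1 S)ᵀ).mulVec v = μ • v) ↔
       (∃ w : Fin R1 → ℝ, w ≠ 0 ∧
          (mat1 F * (mat1 F)ᵀ).mulVec w
            = (μ / ((I1 : ℝ) * (I2 : ℝ) * (I3 : ℝ))) • w))) := by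
  have hgram : mat1 S * (mat1 S)ᵀ
      = ((I2 : ℝ) * (I3 : ℝ)) • (A1 * (mat1 F * (mat1 F)ᵀ) * A1ᵀ) := by
    rw [hdec, mat1_tuck]
    exact mul_mul_transpose_gram_of_eq_smul_one A1 (mat1 F)
      (kronecker_transpose_mul_self_of_eq_smul_one hA2 hA3)
  refine ⟨hgram, fun μ hμ => ?_⟩
  rw [hgram, ← Matrix.smul_mul, ← Matrix.mul_smul,
    exists_mulVec_conj_eq_smul_iff hA1 (by positivity) _ hμ,
    exists_smul_mulVec_eq_smul_iff _ (by positivity), div_div, mul_assoc]
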